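/- arXiv:2601.19885 — 7 statements merged into one kernel-verified Lean document; each statement's English description precedes it below -/
import Mathlib

section
/- Let L be a field and let f be a formal power series in L[[x]] not divisible by x. Let u, s be positive integers such that s is not a multiple of the characteristic of L. If g is an element of L[[x^{1/u}]] (i.e., a power series in the variable x^{1/u}) with g^s = f, then g lies in L[[x]], i.e., all coefficients of g at fractional powers of x vanish. -/
/-!
By strong induction on `n ∉ uℕ`, write `g = t + X^n w` with `t` the truncation of `g` below `n`.
By induction `t`, and hence `t^s`, is supported on `uℕ`, and modulo
`X^(n+1)` we have `g^s ≡ t^s + s t^(s-1) X^n w`. Comparing the coefficients of `X^n` gives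
`0 = s g(0)^(s-1) w(0)`, and `s g(0)^(s-1) ≠ 0`, so the coefficient `w(0)` of `X^n` in `g` vanishes.
-/

open PowerSeries

namespace PowerSeries

variable {R : Type*}

/-- With `X` read as `x^{1/u}`, this is the copy of `R⟦x⟧` inside `R⟦x^{1/u}⟧`. -/
def supportedOnMultiples [Semiring R] (u : ℕ) : Subsemiring R⟦X⟧ where
  carrier := {φ | ∀ m, ¬ u ∣ m → coeff m φ = 0}
  mul_mem' {a b} ha hb m hm := by
    rw [coeff_mul]
    refine Finset.sum_eq_zero fun p hp => ?_
    rw [Finset.HasAntidiagonal.mem_antidiagonal] at hp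
    by_cases h₁ : u ∣ p.1
    · rw [hb p.2 fun h₂ => hm (hp ▸ dvd_add h₁ h₂), mul_zero]
    · rw [ha p.1 h₁, zero_mul]
  one_mem' m hm := by
    rw [coeff_one, if_neg]
    rintro rfl
    exact hm (dvd_zero u)
  add_mem' ha hb m hm := by rw [map_add, ha m hm, hb m hm, add_zero]
  zero_mem' m _ := map_zero _

theorem mem_supportedOnMultiples [Semiring R] {u : ℕ} {φ : R⟦X⟧} :
    φ ∈ supportedOnMultiples u ↔ ∀ m, ¬ u ∣ m → coeff m φ = 0 :=
  Iff.rfl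

theorem coeff_add_X_pow_mul_pow [CommRing R] (t w : R⟦X⟧) {n : ℕ} (hn : 0 < n) (s : ℕ) :
    coeff n ((t + X ^ n * w) ^ s) =
      coeff n (t ^ s) + s * constantCoeff t ^ (s - 1) * constantCoeff w := by
  obtain ⟨c, hc⟩ := sq_dvd_add_pow_sub_sub (X ^ n * w) t s
  have hsq : coeff n ((X ^ n * w) ^ 2 * c) = 0 := by
    refine X_pow_dvd_iff.mp ?_ n (Nat.lt_succ_self n)
    exact (pow_dvd_pow X (by omega : n + 1 ≤ 2 * n)).trans (Dvd.intro (w ^ 2 * c) (by ring))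
  have hlin : coeff n (t ^ (s - 1) * (X ^ n * w) * (s : R⟦X⟧)) =
      s * constantCoeff t ^ (s - 1) * constantCoeff w := by
    rw [show t ^ (s - 1) * (X ^ n * w) * (s : R⟦X⟧) = X ^ n * (C (s : R) * t ^ (s - 1) * w) by
      rw [map_natCast]; ring]
    rw [coeff_X_pow_mul', if_pos le_rfl, Nat.sub_self, coeff_zero_eq_constantCoeff_apply,
      map_mul, map_mul, map_pow, constantCoeff_C]
  rw [eq_add_of_sub_eq (eq_add_of_sub_eq hc), map_add, map_add, hsq, hlin]
  ring

theorem mem_supportedOnMultiples_of_pow_mem [CommRing R] [NoZeroDivisors R] {u s : ℕ}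
    {g : R⟦X⟧} (hs : (s : R) ≠ 0) (hg : constantCoeff g ≠ 0)
    (hpow : g ^ s ∈ supportedOnMultiples u) : g ∈ supportedOnMultiples u := by
  intro n
  induction n using Nat.strong_induction_on with
  | _ n ih =>
  intro hn
  have hn0 : 0 < n := Nat.pos_of_ne_zero fun h => hn (h ▸ dvd_zero u)
  set t : R⟦X⟧ := ↑(trunc n g)
  have ht : t ∈ supportedOnMultiples u := fun m hm => by
    rw [Polynomial.coeff_coe, coeff_trunc]
    split_ifs with hmn
    exacts [ih m hmn hm, rfl]
  obtain ⟨w, hw⟩ : X ^ n ∣ g - t := X_pow_dvd_iff.mpr fun m hm => by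
    rw [map_sub, Polynomial.coeff_coe, coeff_trunc, if_pos hm, sub_self]
  have hgtw : g = t + X ^ n * w := by rw [← hw]; ring
  have htg : constantCoeff t = constantCoeff g := by
    rw [← coeff_zero_eq_constantCoeff_apply, ← coeff_zero_eq_constantCoeff_apply,
      Polynomial.coeff_coe, coeff_trunc, if_pos hn0]
  have hw0 : constantCoeff w = 0 := by
    have h := hpow n hn
    rw [hgtw, coeff_add_X_pow_mul_pow t w hn0, pow_mem ht s n hn, zero_add, htg] at h
    exact (mul_eq_zero.mp h).resolve_left (mul_ne_zero hs (pow_ne_zero _ hg))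
  rw [hgtw, map_add, Polynomial.coeff_coe, coeff_trunc, if_neg (lt_irrefl n), zero_add,
    coeff_X_pow_mul', if_pos le_rfl, Nat.sub_self, coeff_zero_eq_constantCoeff_apply, hw0]

end PowerSeries

theorem stmt_0_general (L : Type*) [Field L] (f g : PowerSeries L)
    (hf : PowerSeries.constantCoeff f ≠ 0)
    (u s : ℕ)
    (hchar : ¬ (ringChar L ∣ s))
    (hroot : ∀ n : ℕ, PowerSeries.coeff n (g ^ s) =
      if u ∣ n then PowerSeries.coeff (n / u) f else 0) :
    ∀ n : ℕ, ¬ u ∣ n → PowerSeries.coeff n g = 0 := by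
  have hs : (s : L) ≠ 0 := mt (ringChar.spec L s).mp hchar
  have hpow : g ^ s ∈ supportedOnMultiples u :=
    mem_supportedOnMultiples.mpr fun n hn => by rw [hroot n, if_neg hn]
  have hg : constantCoeff g ≠ 0 := by
    have h0 := hroot 0
    rw [if_pos (dvd_zero u), Nat.zero_div, coeff_zero_eq_constantCoeff_apply,
      coeff_zero_eq_constantCoeff_apply, map_pow] at h0
    exact ne_zero_pow (by rintro rfl; exact hs Nat.cast_zero) (h0 ▸ hf)
  exact mem_supportedOnMultiples.mp (mem_supportedOnMultiples_of_pow_mem hs hg hpow)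

/-- Let `L` be a field and `f ∈ L[[x]]` not divisible by `x` (i.e. with
nonzero constant coefficient).  Let `u, s` be positive integers with `char L ∤ s`.
We model `L[[x^{1/u}]]` as power series in the variable `z = x^{1/u}`, so that an element
of `L[[x]]` corresponds to a series supported on exponents divisible by `u`.
If `g ∈ L[[x^{1/u}]]` satisfies `g^s = f`, then `g ∈ L[[x]]`, i.e. all coefficients of `g`
at fractional powers of `x` vanish. -/
theorem stmt_0 (L : Type*) [Field L] (f g : PowerSeries L)
    (hf : PowerSeries.constantCoeff f ≠ 0)
    (u s : ℕ) (hu : 0 < u) (hs : 0 < s)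
    (hchar : ¬ (ringChar L ∣ s))
    (hroot : ∀ n : ℕ, PowerSeries.coeff n (g ^ s) =
      if u ∣ n then PowerSeries.coeff (n / u) f else 0) :
    ∀ n : ℕ, ¬ u ∣ n → PowerSeries.coeff n g = 0 :=
  stmt_0_general L f g hf u s hchar hroot
end

section
/- Let k be a field and T = k[[t]]. Let θ₁, …, θ_d be elements of T and consider f = (y − θ₁)⋯(y − θ_d) as an element of T[y]. Let ℓ ≥ 1. If f lies in the ideal (y, t^ℓ)^d of T[y], then ord_t(θ_i) ≥ ℓ for all 1 ≤ i ≤ d. -/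
/-!
Write `a = t^ℓ`. Membership in `(y, a)^d` means that `a^(d-j)` divides the coefficient of `y^j`
in `f`, so the monic `f` is the rescaling `a^d g(y / a)` of a monic `g ∈ T[y]`. Then each
`θᵢ / a` is a root of `g`, hence integral over `T`, and lies in `T` because `T` is integrally
closed.
-/

open Polynomial

namespace Polynomial

variable {R : Type*} [CommRing R]

theorem pow_sub_dvd_coeff_of_mem_span_X_C_pow {a : R} {n : ℕ} {p : R[X]}
    (hp : p ∈ Ideal.span {X, C a} ^ n) (j : ℕ) : a ^ (n - j) ∣ p.coeff j := by
  induction n generalizing p j with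
  | zero => simp
  | succ n ih =>
    rw [pow_succ] at hp
    induction hp using Submodule.mul_induction_on' generalizing j with
    | mem_mul_mem q hq r hr =>
      obtain ⟨u, v, rfl⟩ := Ideal.mem_span_pair.mp hr
      have hu := ih (Ideal.mul_mem_right u _ hq)
      have hv := ih (Ideal.mul_mem_right v _ hq)
      rw [show q * (u * X + v * C a) = q * u * X + q * v * C a by ring, coeff_add, coeff_mul_C]
      refine dvd_add ?_ ((pow_dvd_pow a (by omega)).trans
        (pow_succ a (n - j) ▸ mul_dvd_mul_right (hv j) a))
      cases j with
      | zero => simp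
      | succ j => simpa using hu j
    | add q _ r _ hq hr => simpa only [coeff_add] using dvd_add (hq j) (hr j)

theorem exists_monic_scaleRoots_eq [Nontrivial R] {p : R[X]} (hp : p.Monic) {a : R}
    (h : ∀ j, a ^ (p.natDegree - j) ∣ p.coeff j) :
    ∃ q : R[X], q.Monic ∧ q.scaleRoots a = p := by
  choose b hb using h
  have hbd : b p.natDegree = 1 := by simpa [hp.coeff_natDegree] using (hb p.natDegree).symm
  set d := p.natDegree
  set q := ∑ j ∈ Finset.range (d + 1), C (b j) * X ^ j
  have hcoeff : ∀ j, q.coeff j = if j ≤ d then b j else 0 := fun j => by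
    simp [q, finsetSum_coeff]
  have hdeg : q.natDegree ≤ d := natDegree_sum_le_of_forall_le _ _ fun j hj =>
    (natDegree_C_mul_X_pow_le _ _).trans (Nat.lt_succ_iff.mp (Finset.mem_range.mp hj))
  have hqd : q.coeff d = 1 := by simp [hcoeff, hbd]
  refine ⟨q, monic_of_natDegree_le_of_coeff_eq_one d hdeg hqd, ?_⟩
  ext j
  rw [coeff_scaleRoots, natDegree_eq_of_le_of_coeff_ne_zero hdeg (hqd ▸ one_ne_zero), hcoeff]
  split_ifs with hj
  · rw [hb j, mul_comm]
  · rw [zero_mul, coeff_eq_zero_of_natDegree_lt (not_le.mp hj)]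

theorem dvd_of_isRoot_of_pow_sub_dvd_coeff [IsDomain R] [IsIntegrallyClosed R] {p : R[X]}
    (hp : p.Monic) {a r : R} (ha : a ≠ 0) (h : ∀ j, a ^ (p.natDegree - j) ∣ p.coeff j)
    (hr : p.IsRoot r) : a ∣ r := by
  obtain ⟨q, hq, rfl⟩ := exists_monic_scaleRoots_eq hp h
  let f := algebraMap R (FractionRing R)
  have hfa : f a ≠ 0 :=
    IsFractionRing.to_map_ne_zero_of_mem_nonZeroDivisors (mem_nonZeroDivisors_of_ne_zero ha)
  have hroot : q.eval₂ f (f r / f a) = 0 := by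
    have := scaleRoots_eval₂_mul f (f r / f a) a (p := q)
    rw [mul_div_cancel₀ _ hfa, eval₂_at_apply, hr.eq_zero, map_zero, eq_comm] at this
    exact (mul_eq_zero.mp this).resolve_left (pow_ne_zero _ hfa)
  obtain ⟨y, hy⟩ := IsIntegrallyClosed.algebraMap_eq_of_integral ⟨q, hq, hroot⟩
  refine ⟨y, IsFractionRing.injective R (FractionRing R) ?_⟩
  rw [map_mul, hy, mul_div_cancel₀ _ hfa]

end Polynomial

theorem stmt_1_general (k : Type*) [Field k] (d : ℕ) (θ : Fin d → PowerSeries k)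
    (ℓ : ℕ)
    (hf : (∏ i, (Polynomial.X - Polynomial.C (θ i))) ∈
      (Ideal.span {(Polynomial.X : Polynomial (PowerSeries k)),
        Polynomial.C ((PowerSeries.X : PowerSeries k) ^ ℓ)}) ^ d) :
    ∀ i, (PowerSeries.X : PowerSeries k) ^ ℓ ∣ θ i := by
  have hmonic : (∏ i, (X - C (θ i))).Monic :=
    monic_prod_of_monic _ _ fun i _ => monic_X_sub_C (θ i)
  have hdeg : (∏ i, (X - C (θ i))).natDegree = d := by
    simp [natDegree_prod_of_monic _ _ fun i _ => monic_X_sub_C (θ i)]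
  intro i
  refine dvd_of_isRoot_of_pow_sub_dvd_coeff hmonic (pow_ne_zero ℓ PowerSeries.X_ne_zero)
    (by rw [hdeg]; exact pow_sub_dvd_coeff_of_mem_span_X_C_pow hf) ?_
  simp [eval_prod, Finset.prod_eq_zero_iff, sub_eq_zero]

/-- Let `k` be a field, `T = k[[t]]`, and `θ₁, …, θ_d ∈ T`.  Consider
`f = (y − θ₁)⋯(y − θ_d)` in `T[y]`.  Let `ℓ ≥ 1`.  If `f` lies in the ideal `(y, t^ℓ)^d`
of `T[y]`, then `ord_t(θᵢ) ≥ ℓ` (equivalently `t^ℓ ∣ θᵢ`) for all `i`. -/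
theorem stmt_1 (k : Type*) [Field k] (d : ℕ) (θ : Fin d → PowerSeries k)
    (ℓ : ℕ) (hℓ : 1 ≤ ℓ)
    (hf : (∏ i, (Polynomial.X - Polynomial.C (θ i))) ∈
      (Ideal.span {(Polynomial.X : Polynomial (PowerSeries k)),
        Polynomial.C ((PowerSeries.X : PowerSeries k) ^ ℓ)}) ^ d) :
    ∀ i, (PowerSeries.X : PowerSeries k) ^ ℓ ∣ θ i :=
  stmt_1_general k d θ ℓ hf
end

section
/- Let (A, 𝔪) be a Noetherian local ring and I ⊆ A an ideal such that the extension I·Â to the 𝔪-adic completion Â is a principal ideal generated by a nonzerodivisor. Then I is a principal ideal of A. -/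
/-!
Write `φ : A → Â`. The ideal `IÂ` is generated by `φ(I)`, and in the local ring `Â` Nakayama's
lemma lets one pick a single generator of a principal ideal out of any generating set, so
`IÂ = φ(a)Â` for some `a ∈ I`. Since `Â` is flat over `A` and `φ` is a local homomorphism, `Â` is
faithfully flat, so extension of ideals along `φ` is injective and `I = aA`.
-/

open IsLocalRing

theorem IsLocalRing.exists_mem_span_singleton_eq_of_span_eq {R : Type*} [CommRing R]
    [IsLocalRing R] {S : Set R} {g : R} (hS : S.Nonempty) (h : Ideal.span S = Ideal.span {g}) :
    ∃ s ∈ S, Ideal.span {s} = Ideal.span {g} := by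
  by_contra! hne
  have hle : Ideal.span {g} ≤ maximalIdeal R • Ideal.span {g} := by
    nth_rewrite 1 [← h]
    rw [Ideal.span_le]
    intro s hs
    obtain ⟨d, rfl⟩ := Ideal.mem_span_singleton'.mp (h ▸ Ideal.subset_span hs)
    have hd : d ∈ maximalIdeal R := fun hd ↦ hne _ hs (Ideal.span_singleton_mul_left_unit hd g)
    exact Ideal.mul_mem_mul hd (Ideal.mem_span_singleton_self g)
  have hg : Ideal.span {g} = ⊥ := Submodule.eq_bot_of_le_smul_of_le_jacobson_bot _ _
    (Submodule.fg_span_singleton g) hle (maximalIdeal_le_jacobson ⊥)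
  obtain ⟨s, hs⟩ := hS
  have hs_le : Ideal.span {s} ≤ Ideal.span {g} := h ▸ Ideal.span_mono (by simpa using hs)
  exact hne s hs (by rw [hg] at hs_le ⊢; exact le_bot_iff.mp hs_le)

theorem Ideal.exists_eq_span_singleton_of_map_eq_span_singleton {A B : Type*} [CommRing A]
    [CommRing B] [Algebra A B] [IsLocalRing B] [Module.FaithfullyFlat A B] {I : Ideal A} {g : B}
    (h : I.map (algebraMap A B) = Ideal.span {g}) : ∃ a ∈ I, I = Ideal.span {a} := by
  obtain ⟨_, ⟨a, ha, rfl⟩, hspan⟩ :=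
    exists_mem_span_singleton_eq_of_span_eq ⟨_, Set.mem_image_of_mem _ I.zero_mem⟩ h
  refine ⟨a, ha, Ideal.map_injective_of_faithfullyFlat (B := B) ?_⟩
  rw [h, Ideal.map_span, Set.image_singleton, hspan]

instance AdicCompletion.faithfullyFlat_maximalIdeal (A : Type*) [CommRing A] [IsLocalRing A]
    [IsNoetherianRing A] : Module.FaithfullyFlat A (AdicCompletion (maximalIdeal A) A) :=
  Module.FaithfullyFlat.of_flat_of_isLocalHom

/-- Let `(A, 𝔪)` be a Noetherian local ring and `I ⊆ A` an ideal such that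
the extension `I·Â` to the `𝔪`-adic completion `Â` is principal, generated by a
nonzerodivisor.  Then `I` is a principal ideal of `A`. -/
theorem stmt_5 (A : Type*) [CommRing A] [IsLocalRing A] [IsNoetherianRing A] (I : Ideal A)
    (h : ∃ g : AdicCompletion (maximalIdeal A) A,
      g ∈ nonZeroDivisors (AdicCompletion (maximalIdeal A) A) ∧
      Ideal.map (algebraMap A (AdicCompletion (maximalIdeal A) A)) I = Ideal.span {g}) :
    ∃ a : A, I = Ideal.span {a} := by
  obtain ⟨g, -, hg⟩ := h
  obtain ⟨a, -, ha⟩ := Ideal.exists_eq_span_singleton_of_map_eq_span_singleton hg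
  exact ⟨a, ha⟩
end

section
/- In the setting of the two-variable F-threshold problem with 𝔟 = (y, x^ℓ) and hᵢ = y − gᵢ (gᵢ ∈ x^ℓ k[x], with h_s = y, i.e., g_s = 0), if h^{p(a − e_s) + (p−1)e_s} = h₁^{pa₁}⋯h_s^{p(a_s − 1)}⋯h_r^{pa_r}·y^{p−1} ∈ 𝔟^{[pq]}, then h^{a − e_s} ∈ 𝔟^{[q]}; equivalently, (a − e_s/p)/q ∈ 𝒰 implies (a − e_s)/q ∈ 𝒰. -/
open MvPowerSeries Finsupp

section Aux

variable {k : Type*} [Field k]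

lemma stmt12_charP (p : ℕ) [CharP k p] : CharP (MvPowerSeries (Fin 2) k) p := by
  constructor
  intro n
  rw [← CharP.cast_eq_zero_iff k p n]
  constructor
  · intro h
    have := congrArg (constantCoeff) h
    simpa using this
  · intro h
    rw [← map_natCast (C : k →+* MvPowerSeries (Fin 2) k) n, h, map_zero]

lemma stmt12_exists_coeff_pow {f : MvPowerSeries (Fin 2) k} (hf : f ≠ 0) :
    ∃ d : Fin 2 →₀ ℕ, coeff d f ≠ 0 ∧
      ∀ n, 1 ≤ n → coeff (n • d) (f ^ n) = (coeff d f) ^ n := by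
  obtain ⟨d, hd⟩ := exists_finsupp_eq_lexOrder_of_ne_zero hf
  refine ⟨d, coeff_ne_zero_of_lexOrder hd.symm, ?_⟩
  have key : ∀ n, 1 ≤ n → lexOrder (f ^ n) = ↑(toLex (n • d)) ∧
      coeff (n • d) (f ^ n) = (coeff d f) ^ n := by
    intro n hn
    induction n with
    | zero => omega
    | succ m ih =>
      rcases Nat.eq_or_lt_of_le hn with h1 | h1
      · simp [← h1, hd]
      · have hm : 1 ≤ m := by omega
        obtain ⟨ihl, ihc⟩ := ih hm
        have hsm : (m + 1) • d = m • d + d := by rw [succ_nsmul]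
        constructor
        · rw [pow_succ, lexOrder_mul, ihl, hd, hsm]
          rw [← WithTop.coe_add, ← toLex_add]
        · rw [pow_succ, hsm, coeff_mul_of_add_lexOrder ihl hd, ihc, pow_succ]
  exact fun n hn => (key n hn).2

lemma stmt12_coeff_eq_zero_of_mem {P M : ℕ} {f : MvPowerSeries (Fin 2) k}
    (hf : f ∈ Ideal.span {(X 1 : MvPowerSeries (Fin 2) k) ^ P, X 0 ^ M})
    {d : Fin 2 →₀ ℕ} (h0 : d 0 < M) (h1 : d 1 < P) : coeff d f = 0 := by
  rw [Ideal.mem_span_pair] at hf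
  obtain ⟨a, b, hab⟩ := hf
  rw [← hab, map_add, X_pow_eq, X_pow_eq, coeff_mul_monomial, coeff_mul_monomial,
    if_neg, if_neg, add_zero]
  · rw [Finsupp.single_le_iff]; omega
  · rw [Finsupp.single_le_iff]; omega

/-- Decomposition of a power series into a part in the monomial ideal and a "low" part. -/
lemma stmt12_exists_decomp (P M : ℕ) (f : MvPowerSeries (Fin 2) k) :
    ∃ u L, f = u + L ∧ u ∈ Ideal.span {(X 1 : MvPowerSeries (Fin 2) k) ^ P, X 0 ^ M} ∧
      ∀ d : Fin 2 →₀ ℕ, M ≤ d 0 ∨ P ≤ d 1 → coeff d L = 0 := by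
  classical
  set A : MvPowerSeries (Fin 2) k :=
    fun d => coeff (d + single (1 : Fin 2) P) f with hA
  set B : MvPowerSeries (Fin 2) k :=
    fun d => if d 1 < P then coeff (d + single (0 : Fin 2) M) f else 0 with hB
  set L : MvPowerSeries (Fin 2) k :=
    fun d => if d 0 < M ∧ d 1 < P then coeff d f else 0 with hL
  refine ⟨A * X 1 ^ P + B * X 0 ^ M, L, ?_, ?_, ?_⟩
  · ext d
    rw [map_add, map_add, X_pow_eq, X_pow_eq, coeff_mul_monomial, coeff_mul_monomial]
    simp only [coeff_apply]
    simp only [coeff_apply, hA, hB, hL]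
    have e1 : ((d - single (1 : Fin 2) P) + single (1 : Fin 2) P) = d ↔ P ≤ d 1 := by
      constructor
      · intro he; rw [← he]; simp [Finsupp.single_le_iff]
      · intro he; exact tsub_add_cancel_of_le (Finsupp.single_le_iff.mpr he)
    have e0 : ((d - single (0 : Fin 2) M) + single (0 : Fin 2) M) = d ↔ M ≤ d 0 := by
      constructor
      · intro he; rw [← he]; simp [Finsupp.single_le_iff]
      · intro he; exact tsub_add_cancel_of_le (Finsupp.single_le_iff.mpr he)
    have t1 : (d - single (0 : Fin 2) M) 1 = d 1 := by
      rw [Finsupp.tsub_apply, Finsupp.single_apply]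
      simp
    by_cases hd1 : P ≤ d 1
    · rw [if_pos (Finsupp.single_le_iff.mpr hd1), e1.mpr hd1, mul_one,
        if_neg (by omega : ¬ (d 0 < M ∧ d 1 < P)), add_zero]
      by_cases hd0 : M ≤ d 0
      · rw [if_pos (Finsupp.single_le_iff.mpr hd0), t1, if_neg (by omega), zero_mul, add_zero]
      · rw [if_neg (fun hle => hd0 (Finsupp.single_le_iff.mp hle)), add_zero]
    · rw [if_neg (fun hle => hd1 (Finsupp.single_le_iff.mp hle)), zero_add]
      by_cases hd0 : M ≤ d 0
      · rw [if_pos (Finsupp.single_le_iff.mpr hd0), t1, if_pos (by omega), e0.mpr hd0, mul_one,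
          if_neg (by omega : ¬ (d 0 < M ∧ d 1 < P)), add_zero]
      · rw [if_neg (fun hle => hd0 (Finsupp.single_le_iff.mp hle)), zero_add,
          if_pos (by omega : d 0 < M ∧ d 1 < P)]
  · exact Ideal.add_mem _
      (Ideal.mul_mem_left _ _ (Ideal.subset_span (by simp)))
      (Ideal.mul_mem_left _ _ (Ideal.subset_span (by simp)))
  · intro d hd
    rw [coeff_apply, hL]
    exact if_neg (by omega)

lemma stmt12_mem_of_coeff_eq_zero {P M : ℕ} {f : MvPowerSeries (Fin 2) k}
    (h : ∀ d : Fin 2 →₀ ℕ, d 0 < M → d 1 < P → coeff d f = 0) :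
    f ∈ Ideal.span {(X 1 : MvPowerSeries (Fin 2) k) ^ P, X 0 ^ M} := by
  obtain ⟨u, L, hf, hu, hL⟩ := stmt12_exists_decomp P M f
  have hL0 : L = 0 := by
    ext d
    rw [map_zero]
    by_cases hd : M ≤ d 0 ∨ P ≤ d 1
    · exact hL d hd
    · have h1 : coeff d f = 0 := h d (by omega) (by omega)
      have h2 : coeff d u = 0 := stmt12_coeff_eq_zero_of_mem hu (by omega) (by omega)
      have := congrArg (coeff d) hf
      rw [map_add, h1, h2, zero_add] at this
      exact this.symm
  rw [hf, hL0, add_zero]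
  exact hu

/-- Core lemma: `f^p · y^{p-1} ∈ (y^{pP}, x^{pM})` implies `f ∈ (y^P, x^M)`. -/
lemma stmt12_core {p : ℕ} (hp : p.Prime) [CharP k p] {P M : ℕ}
    {f : MvPowerSeries (Fin 2) k}
    (hf : f ^ p * (X 1 : MvPowerSeries (Fin 2) k) ^ (p - 1) ∈
      Ideal.span {(X 1 : MvPowerSeries (Fin 2) k) ^ (p * P), X 0 ^ (p * M)}) :
    f ∈ Ideal.span {(X 1 : MvPowerSeries (Fin 2) k) ^ P, X 0 ^ M} := by
  haveI : CharP (MvPowerSeries (Fin 2) k) p := stmt12_charP p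
  haveI : Fact p.Prime := ⟨hp⟩
  obtain ⟨u, L, hfUL, huJ, hLbox⟩ := stmt12_exists_decomp P M f
  -- `u^p` lies in the big monomial ideal
  have hup : u ^ p ∈
      Ideal.span {(X 1 : MvPowerSeries (Fin 2) k) ^ (p * P), X 0 ^ (p * M)} := by
    rw [Ideal.mem_span_pair] at huJ
    obtain ⟨a, c, hac⟩ := huJ
    rw [← hac, add_pow_char, mul_pow, mul_pow, ← pow_mul, ← pow_mul,
      mul_comm P p, mul_comm M p]
    exact Ideal.add_mem _ (Ideal.mul_mem_left _ _ (Ideal.subset_span (by simp)))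
      (Ideal.mul_mem_left _ _ (Ideal.subset_span (by simp)))
  have hLp : L ^ p * (X 1 : MvPowerSeries (Fin 2) k) ^ (p - 1) ∈
      Ideal.span {(X 1 : MvPowerSeries (Fin 2) k) ^ (p * P), X 0 ^ (p * M)} := by
    have hfp : f ^ p = u ^ p + L ^ p := by rw [hfUL, add_pow_char]
    have : L ^ p * (X 1 : MvPowerSeries (Fin 2) k) ^ (p - 1) =
        f ^ p * X 1 ^ (p - 1) - u ^ p * X 1 ^ (p - 1) := by
      rw [hfp]; ring
    rw [this]
    exact Ideal.sub_mem _ hf (Ideal.mul_mem_right _ _ hup)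
  have hL0 : L = 0 := by
    by_contra hL
    obtain ⟨d, hd0, hdpow⟩ := stmt12_exists_coeff_pow hL
    have hbox : d 0 < M ∧ d 1 < P := by
      by_contra hbox
      exact hd0 (hLbox d (by omega))
    have hcoeff : coeff (p • d + single (1 : Fin 2) (p - 1))
        (L ^ p * (X 1 : MvPowerSeries (Fin 2) k) ^ (p - 1)) = (coeff d L) ^ p := by
      rw [X_pow_eq, coeff_add_mul_monomial, hdpow p hp.one_lt.le, mul_one]
    have hb0 : (p • d + single (1 : Fin 2) (p - 1)) 0 < p * M := by
      rw [Finsupp.add_apply, Finsupp.smul_apply, Finsupp.single_apply,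
        if_neg (by decide : ¬ ((1 : Fin 2) = 0)), smul_eq_mul, add_zero]
      exact (Nat.mul_lt_mul_left hp.pos).mpr hbox.1
    have hb1 : (p • d + single (1 : Fin 2) (p - 1)) 1 < p * P := by
      rw [Finsupp.add_apply, Finsupp.smul_apply, Finsupp.single_apply,
        if_pos rfl, smul_eq_mul]
      have h2 : p * (d 1 + 1) ≤ p * P := Nat.mul_le_mul_left _ (by omega)
      rw [Nat.mul_succ] at h2
      have := hp.pos
      omega
    have := stmt12_coeff_eq_zero_of_mem hLp hb0 hb1
    rw [hcoeff] at this
    exact pow_ne_zero p hd0 this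
  rw [hfUL, hL0, add_zero]
  exact huJ

lemma stmt12_span_image_le {p : ℕ} (hp : p.Prime) [CharP k p] (ℓ n : ℕ) :
    Ideal.span ((· ^ (p ^ n)) ''
        ((Ideal.span {(X 1 : MvPowerSeries (Fin 2) k), X 0 ^ ℓ} :
          Ideal (MvPowerSeries (Fin 2) k)) : Set _)) ≤
      Ideal.span {(X 1 : MvPowerSeries (Fin 2) k) ^ (p ^ n), X 0 ^ (ℓ * p ^ n)} := by
  haveI : CharP (MvPowerSeries (Fin 2) k) p := stmt12_charP p
  haveI : Fact p.Prime := ⟨hp⟩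
  rw [Ideal.span_le]
  rintro _ ⟨z, hz, rfl⟩
  rw [SetLike.mem_coe, Ideal.mem_span_pair] at hz
  obtain ⟨a, c, hac⟩ := hz
  subst hac
  show (a * X 1 + c * X 0 ^ ℓ) ^ p ^ n ∈ _
  rw [add_pow_char_pow, mul_pow, mul_pow, ← pow_mul (X 0) ℓ (p ^ n)]
  exact SetLike.mem_coe.mpr (Ideal.add_mem _
    (Ideal.mul_mem_left _ _ (Ideal.subset_span (by simp)))
    (Ideal.mul_mem_left _ _ (Ideal.subset_span (by simp))))

end Aux

/-- Two-variable F-threshold setting: `R = k[[x,y]]` (`x = X 0`,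
`y = X 1`), `char k = p > 0`, `ℓ ≥ 1`, `𝔟 = (y, x^ℓ)`, `hᵢ = y − gᵢ` with
`gᵢ ∈ x^ℓ·k[x]` and `h_s = y` (i.e. `g_s = 0`).  If, for an exponent vector `b = a − e_s`,
`h₁^{p·b₁}⋯h_r^{p·b_r}·y^{p−1} ∈ 𝔟^{[pq]}` (total exponent vector `p(a − e_s) + (p−1)e_s`),
then `h^{a − e_s} = h^b ∈ 𝔟^{[q]}`.  Equivalently `(a − e_s/p)/q ∈ 𝒰` implies
`(a − e_s)/q ∈ 𝒰`. -/
theorem stmt_12 (k : Type*) [Field k] (p : ℕ) (hp : p.Prime) [CharP k p]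
    (ℓ : ℕ) (hℓ : 0 < ℓ) (r : ℕ) (g : Fin r → Polynomial k)
    (hg : ∀ i, Polynomial.X ^ ℓ ∣ g i)
    (s : Fin r) (hgs : g s = 0)
    (b : Fin r → ℕ) (e : ℕ)
    (hmem : (∏ i, ((MvPowerSeries.X 1 : MvPowerSeries (Fin 2) k)
          - Polynomial.aeval (MvPowerSeries.X (0 : Fin 2)) (g i)) ^ (p * b i)) *
        (MvPowerSeries.X 1 : MvPowerSeries (Fin 2) k) ^ (p - 1) ∈
      Ideal.span ((· ^ (p ^ (e + 1))) ''
        ((Ideal.span {(MvPowerSeries.X 1 : MvPowerSeries (Fin 2) k),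
          MvPowerSeries.X 0 ^ ℓ} : Ideal (MvPowerSeries (Fin 2) k)) : Set _))) :
    (∏ i, ((MvPowerSeries.X 1 : MvPowerSeries (Fin 2) k)
        - Polynomial.aeval (MvPowerSeries.X (0 : Fin 2)) (g i)) ^ b i) ∈
      Ideal.span ((· ^ (p ^ e)) ''
        ((Ideal.span {(MvPowerSeries.X 1 : MvPowerSeries (Fin 2) k),
          MvPowerSeries.X 0 ^ ℓ} : Ideal (MvPowerSeries (Fin 2) k)) : Set _)) := by
  classical
  set H : MvPowerSeries (Fin 2) k := ∏ i, ((MvPowerSeries.X 1 : MvPowerSeries (Fin 2) k)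
      - Polynomial.aeval (MvPowerSeries.X (0 : Fin 2)) (g i)) ^ b i with hH
  have hHp : (∏ i, ((MvPowerSeries.X 1 : MvPowerSeries (Fin 2) k)
      - Polynomial.aeval (MvPowerSeries.X (0 : Fin 2)) (g i)) ^ (p * b i)) = H ^ p := by
    rw [hH, ← Finset.prod_pow]
    exact Finset.prod_congr rfl fun i _ => by rw [← pow_mul, mul_comm]
  rw [hHp] at hmem
  have h1 := stmt12_span_image_le hp ℓ (e + 1) hmem
  have he1 : p ^ (e + 1) = p * p ^ e := by rw [pow_succ, mul_comm]
  have he2 : ℓ * (p * p ^ e) = p * (ℓ * p ^ e) := by ring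
  rw [he1, he2] at h1
  have h2 := stmt12_core hp h1
  have hrev : Ideal.span {(MvPowerSeries.X 1 : MvPowerSeries (Fin 2) k) ^ (p ^ e),
      MvPowerSeries.X 0 ^ (ℓ * p ^ e)} ≤
      Ideal.span ((· ^ (p ^ e)) ''
        ((Ideal.span {(MvPowerSeries.X 1 : MvPowerSeries (Fin 2) k),
          MvPowerSeries.X 0 ^ ℓ} : Ideal (MvPowerSeries (Fin 2) k)) : Set _)) := by
    rw [Ideal.span_le]
    intro z hz
    rcases hz with rfl | hz
    · exact Ideal.subset_span ⟨MvPowerSeries.X 1,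
        Ideal.subset_span (Set.mem_insert _ _), rfl⟩
    · rcases hz with rfl
      exact Ideal.subset_span ⟨MvPowerSeries.X 0 ^ ℓ,
        Ideal.subset_span (Set.mem_insert_of_mem _ rfl),
        (pow_mul (MvPowerSeries.X 0) ℓ (p ^ e)).symm⟩
  exact hrev h2
end

section
/- Let 𝒰 be an upward-closed subset of (ℤ[1/p]_{≥0})^r (with componentwise order) with lower region 𝒧 its complement, and suppose 𝒰 satisfies: a/q ∈ 𝒰 with (a − e_s)/q ∈ 𝒧 implies (a − e_s/p)/q ∈ 𝒧 for each s with a_s > 0. Then for a/q ∈ 𝒰: (a − e_s)/q ∈ 𝒧 for all s with a_s > 0 if and only if a'/q' ∈ 𝒧 for all a'/q' strictly less than a/q (i.e., ≤ componentwise and not equal). -/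
/-!
Write `x = a / p ^ e`. Feeding the gap hypothesis its own conclusion, at the finer
denominators `p ^ (e + k)`, shows that lowering one coordinate of `x` by `1 / p ^ (e + k)`
leaves `U` for every `k`, as soon as lowering it by `1 / p ^ e` does. A point `b / p ^ f`
strictly below `x` is strictly below in some coordinate `s`, hence lies below
`x - e_s / p ^ (e + f)`; by upward closure it is not in `U`. Conversely, `(a - e_s) / p ^ e`
is itself a point strictly below `x`.
-/

section

variable {ι : Type*} {p : ℕ}

def HasPPowDenom (p : ℕ) (x : ι → ℚ) : Prop :=
  ∃ (a : ι → ℕ) (e : ℕ), ∀ i, x i = (a i : ℚ) / (p : ℚ) ^ e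

theorem cast_pow_mul_div_pow_add (hp : p ≠ 0) (n e k : ℕ) :
    ((p ^ k * n : ℕ) : ℚ) / (p : ℚ) ^ (e + k) = n / (p : ℚ) ^ e := by
  push_cast
  rw [pow_add]
  field_simp

theorem div_le_div_sub_one_div_of_lt {a b m n : ℕ} (hm : 0 < m) (hn : 0 < n)
    (h : (b : ℚ) / m < a / n) : (b : ℚ) / m ≤ a / n - 1 / (n * m) := by
  have hnat : b * n + 1 ≤ a * m := by
    rw [div_lt_div_iff₀ (by positivity) (by positivity)] at h
    exact_mod_cast h
  rw [div_sub_div _ _ (by positivity) (by positivity),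
    div_le_div_iff₀ (by positivity) (by positivity)]
  have : ((b * n + 1 : ℕ) : ℚ) ≤ (a * m : ℕ) := by exact_mod_cast hnat
  push_cast at this
  nlinarith [(by positivity : (0:ℚ) ≤ n * m)]

variable [DecidableEq ι]

theorem hasPPowDenom_sub_basis {a : ι → ℕ} {s : ι} (hs : 0 < a s) (e : ℕ) :
    HasPPowDenom p (fun i => ((a i : ℚ) - if i = s then 1 else 0) / (p : ℚ) ^ e) :=
  ⟨fun i => a i - if i = s then 1 else 0, e, fun i => by
    rcases eq_or_ne i s with rfl | h <;> simp [*, Nat.cast_sub hs]⟩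

theorem sub_basis_lt (hp : p ≠ 0) {a : ι → ℕ} {s : ι} (e : ℕ) :
    (fun i => ((a i : ℚ) - if i = s then 1 else 0) / (p : ℚ) ^ e) <
      fun i => (a i : ℚ) / (p : ℚ) ^ e := by
  have hq : (0 : ℚ) < (p : ℚ) ^ e := by positivity
  refine Pi.lt_def.2 ⟨fun i => div_le_div_of_nonneg_right ?_ hq.le, s,
    div_lt_div_of_pos_right (by simp) hq⟩
  exact sub_le_self _ (by split_ifs <;> norm_num)

theorem hasPPowDenom_sub_basis_div_pow (hp : p ≠ 0) {a : ι → ℕ} {s : ι} (hs : 0 < a s)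
    (e k : ℕ) :
    HasPPowDenom p
      (fun i => (a i : ℚ) / (p : ℚ) ^ e - if i = s then 1 / (p : ℚ) ^ (e + k) else 0) := by
  obtain ⟨c, f, hc⟩ := hasPPowDenom_sub_basis (p := p) (a := fun i => p ^ k * a i)
    (Nat.mul_pos (Nat.pow_pos (Nat.pos_of_ne_zero hp)) hs) (e + k)
  exact ⟨c, f, fun i => by
    simpa only [sub_div, cast_pow_mul_div_pow_add hp, ite_div, zero_div] using hc i⟩

theorem sub_basis_div_pow_le_of_lt (hp : p ≠ 0) {a b : ι → ℕ} {e f : ℕ} {s : ι}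
    (hle : (fun i => (b i : ℚ) / (p : ℚ) ^ f) ≤ fun i => (a i : ℚ) / (p : ℚ) ^ e)
    (hlt : (b s : ℚ) / (p : ℚ) ^ f < a s / (p : ℚ) ^ e) :
    (fun i => (b i : ℚ) / (p : ℚ) ^ f) ≤
      fun i => (a i : ℚ) / (p : ℚ) ^ e - if i = s then 1 / (p : ℚ) ^ (e + f) else 0 := by
  intro i
  rcases eq_or_ne i s with rfl | h
  · have hp' : 0 < p := Nat.pos_of_ne_zero hp
    simpa [pow_add] using div_le_div_sub_one_div_of_lt (a := a i) (b := b i)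
      (pow_pos hp' f) (pow_pos hp' e) (by exact_mod_cast hlt)
  · simpa [h] using hle i

theorem sub_basis_div_pow_notMem_of_gap (hp : p ≠ 0) {U : Set (ι → ℚ)}
    (hgap : ∀ (a : ι → ℕ) (e : ℕ) (s : ι), 0 < a s →
      (fun i => (a i : ℚ) / (p : ℚ) ^ e) ∈ U →
      (fun i => ((a i : ℚ) - if i = s then 1 else 0) / (p : ℚ) ^ e) ∉ U →
      (fun i => (a i : ℚ) / (p : ℚ) ^ e - if i = s then 1 / (p : ℚ) ^ (e + 1) else 0) ∉ U)
    {a : ι → ℕ} {e : ℕ} {s : ι} (hs : 0 < a s)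
    (hU : (fun i => (a i : ℚ) / (p : ℚ) ^ e) ∈ U)
    (h : (fun i => ((a i : ℚ) - if i = s then 1 else 0) / (p : ℚ) ^ e) ∉ U) (k : ℕ) :
    (fun i => (a i : ℚ) / (p : ℚ) ^ e - if i = s then 1 / (p : ℚ) ^ (e + k) else 0) ∉ U := by
  induction k with
  | zero => simpa only [sub_div, ite_div, zero_div, add_zero] using h
  | succ k ih =>
    have := hgap (fun i => p ^ k * a i) (e + k) s
      (Nat.mul_pos (Nat.pow_pos (Nat.pos_of_ne_zero hp)) hs)
      (by simpa only [cast_pow_mul_div_pow_add hp] using hU)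
      (by simpa only [sub_div, cast_pow_mul_div_pow_add hp, ite_div, zero_div] using ih)
    simpa only [cast_pow_mul_div_pow_add hp, add_assoc] using this

end

theorem stmt_13_general (p r : ℕ) (hp : p.Prime)
    (U : Set (Fin r → ℚ))
    (hup : ∀ x ∈ U, ∀ y : Fin r → ℚ,
      (∃ (a : Fin r → ℕ) (e : ℕ), ∀ i, y i = (a i : ℚ) / (p : ℚ) ^ e) → x ≤ y → y ∈ U)
    (hgap : ∀ (a : Fin r → ℕ) (e : ℕ) (s : Fin r), 0 < a s →
      (fun i => (a i : ℚ) / (p : ℚ) ^ e) ∈ U →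
      (fun i => ((a i : ℚ) - if i = s then 1 else 0) / (p : ℚ) ^ e) ∉ U →
      (fun i => (a i : ℚ) / (p : ℚ) ^ e - if i = s then 1 / (p : ℚ) ^ (e + 1) else 0) ∉ U)
    (a : Fin r → ℕ) (e : ℕ)
    (hU : (fun i => (a i : ℚ) / (p : ℚ) ^ e) ∈ U) :
    (∀ s : Fin r, 0 < a s →
        (fun i => ((a i : ℚ) - if i = s then 1 else 0) / (p : ℚ) ^ e) ∉ U) ↔
      (∀ y : Fin r → ℚ,
        (∃ (b : Fin r → ℕ) (e' : ℕ), ∀ i, y i = (b i : ℚ) / (p : ℚ) ^ e') →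
        y ≤ (fun i => (a i : ℚ) / (p : ℚ) ^ e) →
        y ≠ (fun i => (a i : ℚ) / (p : ℚ) ^ e) → y ∉ U) := by
  refine ⟨fun h y hy hle hne hyU => ?_, fun h s hs =>
    h _ (hasPPowDenom_sub_basis hs e) (sub_basis_lt hp.ne_zero e).le (sub_basis_lt hp.ne_zero e).ne⟩
  obtain ⟨s, hlt⟩ := (Pi.lt_def.1 (lt_of_le_of_ne hle hne)).2
  obtain ⟨b, f, hb⟩ := hy
  obtain rfl : y = fun i => (b i : ℚ) / (p : ℚ) ^ f := funext hb
  have hs : 0 < a s := Nat.pos_of_ne_zero fun h0 => by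
    simp only [h0, Nat.cast_zero, zero_div] at hlt
    exact hlt.not_ge (by positivity)
  exact sub_basis_div_pow_notMem_of_gap hp.ne_zero hgap hs hU (h s hs) f
    (hup _ hyU _ (hasPPowDenom_sub_basis_div_pow hp.ne_zero hs e f)
      (sub_basis_div_pow_le_of_lt hp.ne_zero hle hlt))

/-- Abstract critical-point lemma.  Points of `(ℤ[1/p]_{≥0})^r` are
modelled as tuples of rationals of the form `a i / p^e`.  Let `𝒰` be an upward-closed set
of such points (with complement `𝒧`) satisfying the "no gaps" property: if `a/q ∈ 𝒰` and
`(a − e_s)/q ∈ 𝒧` (for `s` with `a_s > 0`), then `(a − e_s/p)/q ∈ 𝒧`.  Then for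
`a/q ∈ 𝒰`: `(a − e_s)/q ∈ 𝒧` for all `s` with `a_s > 0` iff every point strictly below
`a/q` lies in `𝒧`. -/
theorem stmt_13 (p r : ℕ) (hp : p.Prime) (hr : 0 < r)
    (U : Set (Fin r → ℚ))
    (hdom : ∀ x ∈ U, ∃ (a : Fin r → ℕ) (e : ℕ), ∀ i, x i = (a i : ℚ) / (p : ℚ) ^ e)
    (hup : ∀ x ∈ U, ∀ y : Fin r → ℚ,
      (∃ (a : Fin r → ℕ) (e : ℕ), ∀ i, y i = (a i : ℚ) / (p : ℚ) ^ e) → x ≤ y → y ∈ U)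
    (hgap : ∀ (a : Fin r → ℕ) (e : ℕ) (s : Fin r), 0 < a s →
      (fun i => (a i : ℚ) / (p : ℚ) ^ e) ∈ U →
      (fun i => ((a i : ℚ) - if i = s then 1 else 0) / (p : ℚ) ^ e) ∉ U →
      (fun i => (a i : ℚ) / (p : ℚ) ^ e - if i = s then 1 / (p : ℚ) ^ (e + 1) else 0) ∉ U)
    (a : Fin r → ℕ) (e : ℕ)
    (hU : (fun i => (a i : ℚ) / (p : ℚ) ^ e) ∈ U) :
    (∀ s : Fin r, 0 < a s →
        (fun i => ((a i : ℚ) - if i = s then 1 else 0) / (p : ℚ) ^ e) ∉ U) ↔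
      (∀ y : Fin r → ℚ,
        (∃ (b : Fin r → ℕ) (e' : ℕ), ∀ i, y i = (b i : ℚ) / (p : ℚ) ^ e') →
        y ≤ (fun i => (a i : ℚ) / (p : ℚ) ^ e) →
        y ≠ (fun i => (a i : ℚ) / (p : ℚ) ^ e) → y ∉ U) :=
  stmt_13_general p r hp U hup hgap a e hU
end

section
/- Let 𝒰 ⊆ (ℤ[1/p]_{≥0})^r be upward closed with the 'no gaps' property of the previous statement, and call c/q a critical point if c/q ∈ 𝒰 and every strictly smaller point is in the complement 𝒧. Then for a ∈ ℤ_{≥0}^r and q a power of p, a/q ∈ 𝒰 if and only if there exists a critical point c/q (same denominator q allowed) with c ≤ a componentwise. -/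
/-!
Among the `u ≤ a` with `u / q ∈ 𝒰` take a minimal one; then `(u - e_s) / q ∈ 𝒧` whenever
`u_s > 0`. Iterating the "no gaps" property (after rescaling `u / q = u p^k / (q p^k)`) gives
`u / q - e_s / (q p^k) ∈ 𝒧` for every `k`. A point `y` strictly below `u / q` has some
coordinate `y_s < u_s / q`, hence `y ≤ u / q - e_s / (q p^k)` once `q p^k` is a common
denominator, and `y ∈ 𝒧` by upward closure of `𝒰`.
-/

variable {ι : Type*} {p : ℕ}

/-- Membership in `ℤ[1/p]_{≥0}^ι`. -/
def IsPFraction (p : ℕ) (x : ι → ℚ) : Prop :=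
  ∃ (a : ι → ℕ) (e : ℕ), ∀ i, x i = (a i : ℚ) / (p : ℚ) ^ e

def ratPoint (p e : ℕ) (a : ι → ℕ) : ι → ℚ := fun i => (a i : ℚ) / (p : ℚ) ^ e

def IsCriticalPoint (p : ℕ) (U : Set (ι → ℚ)) (x : ι → ℚ) : Prop :=
  x ∈ U ∧ ∀ y, IsPFraction p y → y ≤ x → y ≠ x → y ∉ U

def NoGaps [DecidableEq ι] (p : ℕ) (U : Set (ι → ℚ)) : Prop :=
  ∀ (a : ι → ℕ) (e : ℕ) (s : ι), 0 < a s → ratPoint p e a ∈ U →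
    (fun i => ((a i : ℚ) - if i = s then 1 else 0) / (p : ℚ) ^ e) ∉ U →
    (fun i => (a i : ℚ) / (p : ℚ) ^ e - if i = s then 1 / (p : ℚ) ^ (e + 1) else 0) ∉ U

lemma ratPoint_mono {e : ℕ} {a b : ι → ℕ} (h : a ≤ b) :
    ratPoint p e a ≤ ratPoint p e b :=
  fun i => div_le_div_of_nonneg_right (Nat.cast_le.mpr (h i)) (by positivity)

lemma natCast_mul_pow_div_pow (hp : p ≠ 0) (n e k : ℕ) :
    ((n * p ^ k : ℕ) : ℚ) / (p : ℚ) ^ (e + k) = n / (p : ℚ) ^ e := by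
  have : (p : ℚ) ≠ 0 := by exact_mod_cast hp
  push_cast
  rw [pow_add]
  field_simp

/-- At the common denominator `p ^ (e + e')`, the numerators of `b / p^e' < n / p^e` differ
by at least one. -/
lemma le_sub_one_div_pow_of_lt (hp : p ≠ 0) {b n e e' : ℕ}
    (h : (b : ℚ) / (p : ℚ) ^ e' < n / (p : ℚ) ^ e) :
    (b : ℚ) / (p : ℚ) ^ e' ≤ n / (p : ℚ) ^ e - 1 / (p : ℚ) ^ (e + e') := by
  have hp' : (0 : ℚ) < p := by exact_mod_cast hp.bot_lt
  have hlt : b * p ^ e < n * p ^ e' := by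
    rw [div_lt_div_iff₀ (by positivity) (by positivity)] at h
    exact_mod_cast h
  have hle : (b : ℚ) * p ^ e + 1 ≤ n * p ^ e' := by exact_mod_cast hlt
  have hb : (b : ℚ) / (p : ℚ) ^ e' = b * p ^ e / (p : ℚ) ^ (e + e') := by
    rw [pow_add]; field_simp
  have hn : (n : ℚ) / (p : ℚ) ^ e - 1 / (p : ℚ) ^ (e + e') =
      (n * p ^ e' - 1) / (p : ℚ) ^ (e + e') := by
    rw [pow_add]; field_simp
  rw [hb, hn]
  exact div_le_div_of_nonneg_right (by linarith) (by positivity)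

section

variable [DecidableEq ι]

lemma isPFraction_sub_single (hp : p ≠ 0) {u : ι → ℕ} {s : ι} (hs : 0 < u s) (e k : ℕ) :
    IsPFraction p
      (fun i => (u i : ℚ) / (p : ℚ) ^ e - if i = s then 1 / (p : ℚ) ^ (e + k) else 0) := by
  refine ⟨fun i => u i * p ^ k - if i = s then 1 else 0, e + k, fun i => ?_⟩
  have hs' : 1 ≤ u s * p ^ k := Nat.mul_pos hs (Nat.pos_of_ne_zero (pow_ne_zero k hp))
  by_cases h : i = s
  · subst h
    simp only [if_true, Nat.cast_sub hs', Nat.cast_one, sub_div,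
      ← natCast_mul_pow_div_pow hp (u i) e k]
  · simp [h, ← natCast_mul_pow_div_pow hp (u i) e k]

lemma exists_le_sub_single_of_lt (hp : p ≠ 0) {y : ι → ℚ} (hy : IsPFraction p y)
    {u : ι → ℕ} {e : ℕ} (hle : y ≤ ratPoint p e u) (hne : y ≠ ratPoint p e u) :
    ∃ s k, 0 < u s ∧ y ≤ fun i =>
      (u i : ℚ) / (p : ℚ) ^ e - if i = s then 1 / (p : ℚ) ^ (e + k) else 0 := by
  obtain ⟨b, e', hb⟩ := hy
  obtain ⟨s, hs⟩ := Function.ne_iff.mp hne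
  have hlt : (b s : ℚ) / (p : ℚ) ^ e' < u s / (p : ℚ) ^ e :=
    hb s ▸ lt_of_le_of_ne (hle s) hs
  refine ⟨s, e', Nat.pos_of_ne_zero fun h0 => ?_, fun i => ?_⟩
  · rw [h0, Nat.cast_zero, zero_div] at hlt
    exact hlt.not_ge (by positivity)
  · by_cases h : i = s
    · subst h
      simpa [hb i] using le_sub_one_div_pow_of_lt hp hlt
    · simpa [h, ratPoint] using hle i

variable {U : Set (ι → ℚ)}

lemma NoGaps.notMem_sub_single (hgap : NoGaps p U) (hp : p ≠ 0) {u : ι → ℕ} {e : ℕ}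
    {s : ι} (hs : 0 < u s) (hu : ratPoint p e u ∈ U)
    (hu' : (fun i => ((u i : ℚ) - if i = s then 1 else 0) / (p : ℚ) ^ e) ∉ U) (k : ℕ) :
    (fun i => (u i : ℚ) / (p : ℚ) ^ e -
      if i = s then 1 / (p : ℚ) ^ (e + k) else 0) ∉ U := by
  induction k with
  | zero =>
    convert hu' using 2
    funext i
    split_ifs <;> simp [sub_div]
  | succ k ih =>
    have hscale := fun n => natCast_mul_pow_div_pow hp n e k
    have hk := hgap (fun i => u i * p ^ k) (e + k) s
      (Nat.mul_pos hs (Nat.pos_of_ne_zero (pow_ne_zero k hp)))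
      (by
        show (fun i => ((u i * p ^ k : ℕ) : ℚ) / (p : ℚ) ^ (e + k)) ∈ U
        simp only [hscale]
        exact hu)
      (by simpa only [sub_div, hscale, ite_div, zero_div] using ih)
    simpa only [hscale, add_assoc] using hk

lemma isCriticalPoint_ratPoint_of_forall_notMem (hp : p ≠ 0)
    (hup : ∀ x ∈ U, ∀ y, IsPFraction p y → x ≤ y → y ∈ U) (hgap : NoGaps p U)
    {u : ι → ℕ} {e : ℕ} (hu : ratPoint p e u ∈ U)
    (hmin : ∀ s, 0 < u s →
      (fun i => ((u i : ℚ) - if i = s then 1 else 0) / (p : ℚ) ^ e) ∉ U) :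
    IsCriticalPoint p U (ratPoint p e u) := by
  refine ⟨hu, fun y hy hle hne hyU => ?_⟩
  obtain ⟨s, k, hs, hys⟩ := exists_le_sub_single_of_lt hp hy hle hne
  exact hgap.notMem_sub_single hp hs hu (hmin s hs) k
    (hup y hyU _ (isPFraction_sub_single hp hs e k) hys)

lemma natCast_tsub_single {u : ι → ℕ} {s : ι} (hs : 0 < u s) (i : ι) :
    (((u - Pi.single s 1 : ι → ℕ) i : ℕ) : ℚ) = u i - if i = s then 1 else 0 := by
  by_cases h : i = s
  · subst h
    simp [Nat.cast_sub (Nat.one_le_iff_ne_zero.mpr hs.ne')]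
  · simp [h]

lemma exists_isCriticalPoint_le [Finite ι] (hp : p ≠ 0)
    (hup : ∀ x ∈ U, ∀ y, IsPFraction p y → x ≤ y → y ∈ U) (hgap : NoGaps p U)
    {a : ι → ℕ} {e : ℕ} (ha : ratPoint p e a ∈ U) :
    ∃ c ≤ a, IsCriticalPoint p U (ratPoint p e c) := by
  obtain ⟨c, ⟨hca, hc⟩, hmin⟩ :=
    wellFounded_lt.has_min {u : ι → ℕ | u ≤ a ∧ ratPoint p e u ∈ U} ⟨a, le_rfl, ha⟩
  refine ⟨c, hca,
    isCriticalPoint_ratPoint_of_forall_notMem hp hup hgap hc fun s hs hcs => ?_⟩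
  have hlt : c - Pi.single s 1 < c :=
    lt_of_le_of_ne tsub_le_self fun h => by
      have := congrFun h s
      simp only [Pi.sub_apply, Pi.single_eq_same] at this
      omega
  refine hmin (c - Pi.single s 1) ⟨tsub_le_self.trans hca, ?_⟩ hlt
  show (fun i => (((c - Pi.single s 1 : ι → ℕ) i : ℕ) : ℚ) / (p : ℚ) ^ e) ∈ U
  simpa only [natCast_tsub_single hs] using hcs

end

theorem stmt_14_general (p r : ℕ) (hp : p.Prime)
    (U : Set (Fin r → ℚ))
    (hup : ∀ x ∈ U, ∀ y : Fin r → ℚ,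
      (∃ (a : Fin r → ℕ) (e : ℕ), ∀ i, y i = (a i : ℚ) / (p : ℚ) ^ e) → x ≤ y → y ∈ U)
    (hgap : ∀ (a : Fin r → ℕ) (e : ℕ) (s : Fin r), 0 < a s →
      (fun i => (a i : ℚ) / (p : ℚ) ^ e) ∈ U →
      (fun i => ((a i : ℚ) - if i = s then 1 else 0) / (p : ℚ) ^ e) ∉ U →
      (fun i => (a i : ℚ) / (p : ℚ) ^ e - if i = s then 1 / (p : ℚ) ^ (e + 1) else 0) ∉ U)
    (a : Fin r → ℕ) (e : ℕ) :
    (fun i => (a i : ℚ) / (p : ℚ) ^ e) ∈ U ↔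
      ∃ c : Fin r → ℕ,
        (fun i => (c i : ℚ) / (p : ℚ) ^ e) ∈ U ∧
        (∀ y : Fin r → ℚ,
          (∃ (b : Fin r → ℕ) (e' : ℕ), ∀ i, y i = (b i : ℚ) / (p : ℚ) ^ e') →
          y ≤ (fun i => (c i : ℚ) / (p : ℚ) ^ e) →
          y ≠ (fun i => (c i : ℚ) / (p : ℚ) ^ e) → y ∉ U) ∧
        ∀ i, c i ≤ a i := by
  constructor
  · intro ha
    obtain ⟨c, hca, hcU, hcrit⟩ := exists_isCriticalPoint_le hp.ne_zero hup hgap ha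
    exact ⟨c, hcU, hcrit, hca⟩
  · rintro ⟨c, hcU, -, hca⟩
    exact hup _ hcU _ ⟨a, e, fun _ => rfl⟩ (ratPoint_mono hca)

/-- Abstract critical-point existence.  With `𝒰 ⊆ (ℤ[1/p]_{≥0})^r`
upward closed and satisfying the "no gaps" property of Statement 13, call `c/q` a
critical point if `c/q ∈ 𝒰` and every strictly smaller point is in the complement `𝒧`.
Then for `a ∈ ℤ_{≥0}^r` and `q = p^e`, `a/q ∈ 𝒰` iff there exists a critical point `c/q`
(with the same denominator `q`) with `c ≤ a` componentwise. -/
theorem stmt_14 (p r : ℕ) (hp : p.Prime) (hr : 0 < r)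
    (U : Set (Fin r → ℚ))
    (hdom : ∀ x ∈ U, ∃ (a : Fin r → ℕ) (e : ℕ), ∀ i, x i = (a i : ℚ) / (p : ℚ) ^ e)
    (hup : ∀ x ∈ U, ∀ y : Fin r → ℚ,
      (∃ (a : Fin r → ℕ) (e : ℕ), ∀ i, y i = (a i : ℚ) / (p : ℚ) ^ e) → x ≤ y → y ∈ U)
    (hgap : ∀ (a : Fin r → ℕ) (e : ℕ) (s : Fin r), 0 < a s →
      (fun i => (a i : ℚ) / (p : ℚ) ^ e) ∈ U →
      (fun i => ((a i : ℚ) - if i = s then 1 else 0) / (p : ℚ) ^ e) ∉ U →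
      (fun i => (a i : ℚ) / (p : ℚ) ^ e - if i = s then 1 / (p : ℚ) ^ (e + 1) else 0) ∉ U)
    (a : Fin r → ℕ) (e : ℕ) :
    (fun i => (a i : ℚ) / (p : ℚ) ^ e) ∈ U ↔
      ∃ c : Fin r → ℕ,
        (fun i => (c i : ℚ) / (p : ℚ) ^ e) ∈ U ∧
        (∀ y : Fin r → ℚ,
          (∃ (b : Fin r → ℕ) (e' : ℕ), ∀ i, y i = (b i : ℚ) / (p : ℚ) ^ e') →
          y ≤ (fun i => (c i : ℚ) / (p : ℚ) ^ e) →
          y ≠ (fun i => (c i : ℚ) / (p : ℚ) ^ e) → y ∉ U) ∧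
        ∀ i, c i ≤ a i :=
  stmt_14_general p r hp U hup hgap a e
end

section
/- Let (R, 𝔪) be a regular local ring of characteristic p > 0 of dimension ≥ 2, let x, y be part of a regular system of parameters, and let d, N be positive integers. Then ft^𝔪((x^d, y^N)) ≤ 1/d + 1/N; consequently, for g = x^d − y^{td+1} (with ord_𝔪(g) = d), ft^𝔪(g) ≤ 1/d + 1/(td+1), which tends to 1/d as t → ∞. -/
open IsLocalRing

lemma aux_div_le (q d : ℕ) (hd : 0 < d) : q ≤ d * (q / d + 1) := by
  have h1 := Nat.div_add_mod q d
  have h2 := Nat.mod_lt q hd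
  calc q = d * (q / d) + q % d := h1.symm
    _ ≤ d * (q / d) + d := by omega
    _ = d * (q / d + 1) := by ring

lemma aux_contain {R : Type*} [CommRing R] (M : Ideal R) (x y : R)
    (hx : x ∈ M) (hy : y ∈ M) (d N q : ℕ) (hd : 0 < d) (hN : 0 < N) :
    (Ideal.span {x ^ d, y ^ N}) ^ (q / d + 1 + (q / N + 1)) ≤
      Ideal.span ((· ^ q) '' (M : Set R)) := by
  have key : ∀ (a : R) (k n : ℕ), a ∈ M → q ≤ k * n →
      (Ideal.span {a ^ k} : Ideal R) ^ n ≤ Ideal.span ((· ^ q) '' (M : Set R)) := by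
    intro a k n ha hq
    rw [Ideal.span_singleton_pow, Ideal.span_singleton_le_iff_mem, ← pow_mul]
    have haq : a ^ q ∈ Ideal.span ((· ^ q) '' (M : Set R)) :=
      Ideal.subset_span ⟨a, ha, rfl⟩
    have hrw : a ^ (k * n) = a ^ (k * n - q) * a ^ q := by
      rw [← pow_add, Nat.sub_add_cancel hq]
    rw [hrw]
    exact Ideal.mul_mem_left _ _ haq
  calc (Ideal.span {x ^ d, y ^ N}) ^ (q / d + 1 + (q / N + 1))
      = (Ideal.span {x ^ d} ⊔ Ideal.span {y ^ N}) ^ (q / d + 1 + (q / N + 1)) := by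
        rw [← Ideal.span_insert]
    _ ≤ (Ideal.span {x ^ d}) ^ (q / d + 1) ⊔ (Ideal.span {y ^ N}) ^ (q / N + 1) :=
        Ideal.sup_pow_add_le_pow_sup_pow
    _ ≤ Ideal.span ((· ^ q) '' (M : Set R)) :=
        sup_le (key x d _ hx (aux_div_le q d hd)) (key y N _ hy (aux_div_le q N hN))

/-- The key analytic step: the infimum is at most `1/d + 1/N` because for every `e`
we have a witness with value at most `1/d + 1/N + 2/p^e`. -/
lemma aux_sInf_le {R : Type*} [CommRing R] (M : Ideal R) (x y : R)
    (hx : x ∈ M) (hy : y ∈ M) (p : ℕ) (hp : 1 < p) (d N : ℕ) (hd : 0 < d) (hN : 0 < N)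
    (S : Set ℝ)
    (hmem : ∀ t e' : ℕ,
      (Ideal.span {x ^ d, y ^ N}) ^ t ≤ Ideal.span ((· ^ (p ^ e')) '' (M : Set R)) →
      ((t : ℝ) / (p : ℝ) ^ e') ∈ S)
    (hbdd : BddBelow S) :
    sInf S ≤ 1 / (d : ℝ) + 1 / (N : ℝ) := by
  have hp0 : (0 : ℝ) < p := by positivity
  have hp1 : (1 : ℝ) < p := by exact_mod_cast hp
  refine le_of_forall_gt_imp_ge_of_dense fun c hc => ?_
  set ε := c - (1 / (d : ℝ) + 1 / (N : ℝ)) with hε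
  have hεpos : 0 < ε := sub_pos.mpr hc
  obtain ⟨e, he⟩ := pow_unbounded_of_one_lt (2 / ε) hp1
  have hpe : (0 : ℝ) < (p : ℝ) ^ e := by positivity
  have h2e : 2 / (p : ℝ) ^ e < ε := by
    rw [div_lt_iff₀ hpe]
    rw [div_lt_iff₀ hεpos] at he
    nlinarith
  set q := p ^ e with hq
  set t := q / d + 1 + (q / N + 1) with ht
  have hcont := aux_contain M x y hx hy d N q hd hN
  have hwS : ((t : ℝ) / (p : ℝ) ^ e) ∈ S := hmem t e hcont
  refine le_trans (csInf_le hbdd hwS) ?_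
  have hqr : ((q : ℕ) : ℝ) = (p : ℝ) ^ e := by
    simp [hq]
  have htle : (t : ℝ) ≤ (p : ℝ) ^ e / d + (p : ℝ) ^ e / N + 2 := by
    have h1 : ((q / d : ℕ) : ℝ) ≤ (q : ℝ) / d := Nat.cast_div_le
    have h2 : ((q / N : ℕ) : ℝ) ≤ (q : ℝ) / N := Nat.cast_div_le
    rw [hqr] at h1 h2
    push_cast [ht]
    linarith
  have hd0 : (0 : ℝ) < d := by exact_mod_cast hd
  have hN0 : (0 : ℝ) < N := by exact_mod_cast hN
  have : (t : ℝ) / (p : ℝ) ^ e ≤ 1 / (d : ℝ) + 1 / (N : ℝ) + 2 / (p : ℝ) ^ e := by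
    rw [div_le_iff₀ hpe]
    have expand : (1 / (d : ℝ) + 1 / (N : ℝ) + 2 / (p : ℝ) ^ e) * (p : ℝ) ^ e
        = (p : ℝ) ^ e / d + (p : ℝ) ^ e / N + 2 := by
      field_simp
    rw [expand]
    exact htle
  linarith

/-- Let `(R, 𝔪)` be a regular local ring of characteristic `p > 0` of
dimension `≥ 2` and let `x, y` be part of a regular system of parameters.  Then for all
positive `d, N` the F-threshold (here `ft^𝔪(𝔞) = inf { t/p^{e'} : 𝔞^t ⊆ 𝔪^{[p^{e'}]} }`)
satisfies `ft^𝔪((x^d, y^N)) ≤ 1/d + 1/N`; consequently, for `g = x^d − y^{td+1}`,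
`ft^𝔪(g) ≤ 1/d + 1/(td+1)` for every positive integer `t` (which tends to `1/d` as
`t → ∞`). -/
theorem stmt_18 (R : Type*) [CommRing R] [IsLocalRing R] [IsNoetherianRing R]
    (p : ℕ) (hp : p.Prime) [CharP R p] (x y : R)
    (hreg : ∃ (n : ℕ) (z : Fin n → R) (i j : Fin n),
      Ideal.span (Set.range z) = maximalIdeal R ∧ ringKrullDim R = n ∧
      2 ≤ n ∧ i ≠ j ∧ z i = x ∧ z j = y) :
    (∀ d N : ℕ, 0 < d → 0 < N →
      sInf {w : ℝ | ∃ (t e' : ℕ),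
          (Ideal.span {x ^ d, y ^ N}) ^ t ≤
            Ideal.span ((· ^ (p ^ e')) '' (maximalIdeal R : Set R)) ∧
          w = (t : ℝ) / (p : ℝ) ^ e'} ≤ 1 / (d : ℝ) + 1 / (N : ℝ)) ∧
    (∀ d t : ℕ, 0 < d → 0 < t →
      sInf {w : ℝ | ∃ (t' e' : ℕ),
          (Ideal.span {x ^ d - y ^ (t * d + 1)}) ^ t' ≤
            Ideal.span ((· ^ (p ^ e')) '' (maximalIdeal R : Set R)) ∧
          w = (t' : ℝ) / (p : ℝ) ^ e'} ≤ 1 / (d : ℝ) + 1 / ((t * d + 1 : ℕ) : ℝ)) := by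
  obtain ⟨n, z, i, j, hspan, _, _, hij, hzi, hzj⟩ := hreg
  have hx : x ∈ maximalIdeal R := by
    rw [← hspan, ← hzi]; exact Ideal.subset_span ⟨i, rfl⟩
  have hy : y ∈ maximalIdeal R := by
    rw [← hspan, ← hzj]; exact Ideal.subset_span ⟨j, rfl⟩
  have hp1 : 1 < p := hp.one_lt
  have hbdd : ∀ S : Set ℝ, (∀ w ∈ S, ∃ t e' : ℕ, w = (t : ℝ) / (p : ℝ) ^ e') → BddBelow S := by
    intro S h
    refine ⟨0, fun w hw => ?_⟩
    obtain ⟨t, e', rfl⟩ := h w hw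
    positivity
  constructor
  · intro d N hd hN
    refine aux_sInf_le (maximalIdeal R) x y hx hy p hp1 d N hd hN _ ?_ ?_
    · intro t e' hcont
      exact ⟨t, e', hcont, rfl⟩
    · exact hbdd _ fun w ⟨t, e', _, hw⟩ => ⟨t, e', hw⟩
  · intro d t hd ht
    have hN : 0 < t * d + 1 := Nat.succ_pos _
    refine aux_sInf_le (maximalIdeal R) x y hx hy p hp1 d (t * d + 1) hd hN _ ?_ ?_
    · intro t' e' hcont
      refine ⟨t', e', ?_, rfl⟩
      refine le_trans (Ideal.pow_right_mono ?_ t') hcont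
      rw [Ideal.span_le]
      intro g hg
      simp only [Set.mem_singleton_iff] at hg
      subst hg
      have h1 : x ^ d ∈ Ideal.span ({x ^ d, y ^ (t * d + 1)} : Set R) :=
        Ideal.subset_span (Set.mem_insert _ _)
      have h2 : y ^ (t * d + 1) ∈ Ideal.span ({x ^ d, y ^ (t * d + 1)} : Set R) :=
        Ideal.subset_span (Set.mem_insert_of_mem _ rfl)
      exact Ideal.sub_mem _ h1 h2
    · exact hbdd _ fun w ⟨t', e', _, hw⟩ => ⟨t', e', hw⟩
end
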